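/- For every function f : ℕ+ → ℕ+, the group 𝒬(f) is a free group. -/
import Mathlib


/-- The relators of the presentation `𝒬(f)`: the word `a₁`, together with the words
`a_{i+1} a_{f(i+1)}⁻¹` for `i ∈ ℕ+`. -/
def Qrels (f : ℕ+ → ℕ+) : Set (FreeGroup ℕ+) :=
  {FreeGroup.of 1} ∪
    {r | ∃ i : ℕ+, r = FreeGroup.of (i + 1) * (FreeGroup.of (f (i + 1)))⁻¹}

private def Qsetoid (f : ℕ+ → ℕ+) : Setoid ℕ+ :=
  ⟨Relation.EqvGen (fun a b => ∃ i : ℕ+, a = i + 1 ∧ b = f (i + 1)),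
   Relation.EqvGen.is_equivalence _⟩

private lemma of_eq_of_rel (f : ℕ+ → ℕ+) {a b : ℕ+} (h : (Qsetoid f).r a b) :
    (PresentedGroup.of a : PresentedGroup (Qrels f)) = PresentedGroup.of b := by
  induction h with
  | rel a b h =>
      obtain ⟨i, rfl, rfl⟩ := h
      have : (QuotientGroup.mk (FreeGroup.of (i + 1) * (FreeGroup.of (f (i + 1)))⁻¹) :
          PresentedGroup (Qrels f)) = 1 := by
        apply (QuotientGroup.eq_one_iff _).mpr
        exact Subgroup.subset_normalClosure (Or.inr ⟨i, rfl⟩)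
      have h2 : (PresentedGroup.of (i+1) : PresentedGroup (Qrels f)) *
          (PresentedGroup.of (f (i+1)))⁻¹ = 1 := this
      exact mul_inv_eq_one.mp h2
  | refl => rfl
  | symm _ _ _ ih => exact ih.symm
  | trans _ _ _ _ _ ih1 ih2 => exact ih1.trans ih2

private lemma of_one_eq_one (f : ℕ+ → ℕ+) :
    (PresentedGroup.of 1 : PresentedGroup (Qrels f)) = 1 := by
  apply (QuotientGroup.eq_one_iff _).mpr
  exact Subgroup.subset_normalClosure (Or.inl rfl)

/-- `𝒬(f)` is a free group. -/
theorem stmt_16 (f : ℕ+ → ℕ+) :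
    ∃ S : Type, Nonempty (PresentedGroup (Qrels f) ≃* FreeGroup S) := by
  classical
  let s := Qsetoid f
  let S := {q : Quotient s // q ≠ Quotient.mk s 1}
  refine ⟨S, ⟨?_⟩⟩
  set g : ℕ+ → FreeGroup S := fun n =>
    if h : Quotient.mk s n = Quotient.mk s 1 then 1 else FreeGroup.of ⟨Quotient.mk s n, h⟩
    with hg
  have hrels : ∀ r ∈ Qrels f, FreeGroup.lift g r = 1 := by
    rintro r (rfl | ⟨i, rfl⟩)
    · rw [FreeGroup.lift_apply_of, hg]; exact dif_pos rfl
    · have hq : Quotient.mk s ((i : ℕ+) + 1) = Quotient.mk s (f (i + 1)) :=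
        Quotient.sound (Relation.EqvGen.rel _ _ ⟨i, rfl, rfl⟩)
      simp only [map_mul, map_inv, FreeGroup.lift_apply_of, hg, hq]
      exact mul_inv_eq_one.mpr rfl
  let φ : PresentedGroup (Qrels f) →* FreeGroup S := PresentedGroup.toGroup hrels
  let ψ : FreeGroup S →* PresentedGroup (Qrels f) :=
    FreeGroup.lift fun q => PresentedGroup.of q.1.out
  have key : ∀ n : ℕ+, ψ (φ (PresentedGroup.of n)) = PresentedGroup.of n := by
    intro n
    show ψ (PresentedGroup.toGroup hrels (PresentedGroup.of n)) = _
    rw [PresentedGroup.toGroup.of, hg]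
    by_cases h : Quotient.mk s n = Quotient.mk s 1
    · simp only [h, dif_pos, map_one]
      exact ((of_eq_of_rel f (Quotient.exact h)).trans (of_one_eq_one f)).symm
    · simp only [h, dif_neg, not_false_iff, FreeGroup.lift_apply_of, ψ]
      exact of_eq_of_rel f (Quotient.exact ((Quotient.mk s n).out_eq))
  have h1 : ψ.comp φ = MonoidHom.id _ := PresentedGroup.ext fun n => key n
  have h2 : φ.comp ψ = MonoidHom.id _ := by
    apply FreeGroup.ext_hom
    intro q
    simp only [MonoidHom.comp_apply, MonoidHom.id_apply, ψ, FreeGroup.lift_apply_of]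
    show PresentedGroup.toGroup hrels (PresentedGroup.of q.1.out) = _
    rw [PresentedGroup.toGroup.of]
    simp only [hg]
    have hout : Quotient.mk s q.1.out = q.1 := q.1.out_eq
    rw [dif_neg (by rw [hout]; exact q.2)]
    congr 1
    exact Subtype.ext hout
  exact MonoidHom.toMulEquiv φ ψ h1 h2
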